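/- Let k_1, ..., k_t be positive integers summing to 2K. Construct a 3-candidate weighted Borda election with candidates {p, a, b}, registered manipulators of weights k_1, ..., k_t, two unregistered voters each of weight 3K−1 voting p > a > b and p > b > a respectively, and addition limit 1. Then there is a subsequence of k_1, ..., k_t summing to K if and only if the manipulators can cast votes such that no choice of at most one unregistered voter to add makes p a winner. -/

import Mathlib

/-- The three candidates of a 3-candidate election. -/
inductive Cand : Type
  | p | a | b
deriving DecidableEq

instance : Fintype Cand where
  elems := {Cand.p, Cand.a, Cand.b}
  complete := by intro x; cases x <;> simp

/-- Borda points (for weight 1) that the ballot `f` (a ranking: `f c = 0` means top)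
gives to candidate `c`: `2` for the top, `1` for the middle, `0` for the bottom. -/
def pts (f : Cand → Fin 3) (c : Cand) : ℕ := 2 - (f c : ℕ)

/-- The ballot `p > a > b`. -/
def ballotPAB : Cand → Fin 3 := fun c => match c with | .p => 0 | .a => 1 | .b => 2

/-- The ballot `p > b > a`. -/
def ballotPBA : Cand → Fin 3 := fun c => match c with | .p => 0 | .b => 1 | .a => 2

/-!
Whatever the manipulators do, the three Borda scores add up to `3 · 2K = 6K`, and no candidate
gets more than `4K`. Once the `p > a > b` voter of weight `w = 3K - 1` is added, only `a` can
still beat `p` (`b` would need more than `6K - 2 ≥ 4K` points), which forces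
`score a ≥ score p + 3K`; symmetrically `score b ≥ score p + 3K`. Hence `p` gets nothing,
every manipulator of positive weight ranks `p` last, and `score a = 3K`. With `p` last, `a`
collects `2K` plus the weight of the manipulators ranking `a` first, so those weigh `K`.
Conversely, if `S` weighs `K`, let `S` vote `a > b > p` and the others `b > a > p`.
-/

def ballotABP : Cand → Fin 3 := fun c => match c with | .a => 0 | .b => 1 | .p => 2

def ballotBAP : Cand → Fin 3 := fun c => match c with | .b => 0 | .a => 1 | .p => 2

lemma pts_le_two (f : Cand → Fin 3) (c : Cand) : pts f c ≤ 2 := Nat.sub_le 2 _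

lemma pts_eq_two_of_eq_zero {f : Cand → Fin 3} {c : Cand} (h : f c = 0) : pts f c = 2 := by
  simp [pts, h]

lemma pts_p_add_pts_a_add_pts_b {f : Cand → Fin 3} (hf : Function.Injective f) :
    pts f .p + pts f .a + pts f .b = 3 := by
  have hpa := hf.ne (show Cand.p ≠ Cand.a by decide)
  have hpb := hf.ne (show Cand.p ≠ Cand.b by decide)
  have hab := hf.ne (show Cand.a ≠ Cand.b by decide)
  simp only [pts]
  omega

lemma pts_a_of_pts_p_eq_zero {f : Cand → Fin 3} (hf : Function.Injective f)
    (hp : pts f .p = 0) : pts f .a = 1 + if f .a = 0 then 1 else 0 := by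
  have hpa := hf.ne (show Cand.p ≠ Cand.a by decide)
  simp only [pts] at hp ⊢
  split_ifs <;> omega

section Score

variable {ι : Type*} [Fintype ι] (k : ι → ℕ) (r : ι → Cand → Fin 3)

def score (c : Cand) : ℕ := ∑ i, k i * pts (r i) c

lemma score_le_two_mul_sum (c : Cand) : score k r c ≤ 2 * ∑ i, k i := by
  rw [Finset.mul_sum]
  exact Finset.sum_le_sum fun i _ => by
    rw [mul_comm 2]
    exact Nat.mul_le_mul_left _ (pts_le_two _ _)

lemma score_p_add_score_a_add_score_b (hr : ∀ i, Function.Injective (r i)) :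
    score k r .p + score k r .a + score k r .b = 3 * ∑ i, k i := by
  simp only [score, ← Finset.sum_add_distrib, ← mul_add, pts_p_add_pts_a_add_pts_b (hr _)]
  rw [mul_comm, Finset.sum_mul]

/-- Every voter of positive weight ranks `p` last, so `a` gets one point from each of them and a
second one from those who rank it first. -/
lemma score_a_eq_of_score_p_eq_zero (hr : ∀ i, Function.Injective (r i))
    (hp : score k r .p = 0) :
    score k r .a = ∑ i, k i + ∑ i ∈ Finset.univ.filter (fun i => r i .a = 0), k i := by
  have summand : ∀ i, k i * pts (r i) .a = k i + if r i .a = 0 then k i else 0 := by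
    intro i
    rcases Nat.mul_eq_zero.mp (Finset.sum_eq_zero_iff.mp hp i (Finset.mem_univ i)) with hk | hpi
    · simp [hk]
    · rw [pts_a_of_pts_p_eq_zero (hr i) hpi]
      split_ifs <;> ring
  simp only [score, summand, Finset.sum_add_distrib, Finset.sum_filter]

/-- The candidate that the added voter ranks last cannot overtake `p`: it would need more than
`2 * w ≥ 2 * ∑ k` points. -/
lemma not_forall_score_add_le_iff {f : Cand → Fin 3} (hf : Function.Injective f)
    (hfp : f .p = 0) {w : ℕ} (hw : ∑ i, k i ≤ w) :
    (¬ ∀ c, score k r c + w * pts f c ≤ score k r .p + w * pts f .p) ↔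
      ∃ c, f c = 1 ∧ score k r .p + w < score k r c := by
  rw [pts_eq_two_of_eq_zero hfp]
  constructor
  · intro h
    simp only [not_forall, not_le] at h
    obtain ⟨c, hc⟩ := h
    rcases (by omega : f c = 0 ∨ f c = 1 ∨ f c = 2) with h0 | h1 | h2
    · rw [hf (h0.trans hfp.symm), pts_eq_two_of_eq_zero hfp] at hc
      exact absurd hc (lt_irrefl _)
    · rw [show pts f c = 1 by simp [pts, h1]] at hc
      exact ⟨c, h1, by omega⟩
    · rw [show pts f c = 0 by simp [pts, h2]] at hc
      have := score_le_two_mul_sum k r c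
      omega
  · rintro ⟨c, hc, hlt⟩ h
    have := h c
    rw [show pts f c = 1 by simp [pts, hc]] at this
    omega

end Score

lemma ballotPAB_eq_one_iff (c : Cand) : ballotPAB c = 1 ↔ c = .a := by
  cases c <;> decide

lemma ballotPBA_eq_one_iff (c : Cand) : ballotPBA c = 1 ↔ c = .b := by
  cases c <;> decide

lemma exists_sum_eq_of_score {t K : ℕ} {k : Fin t → ℕ} (hsum : ∑ i, k i = 2 * K)
    {r : Fin t → Cand → Fin 3} (hr : ∀ i, Function.Injective (r i))
    (ha : score k r .p + 3 * K ≤ score k r .a) (hb : score k r .p + 3 * K ≤ score k r .b) :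
    ∃ S : Finset (Fin t), ∑ i ∈ S, k i = K := by
  have htotal := score_p_add_score_a_add_score_b k r hr
  have hp : score k r .p = 0 := by omega
  have := score_a_eq_of_score_p_eq_zero k r hr hp
  exact ⟨Finset.univ.filter (fun i => r i .a = 0), by omega⟩

section Construction

variable {ι : Type*} [DecidableEq ι] (k : ι → ℕ) (S : Finset ι)

def splitProfile (i : ι) : Cand → Fin 3 := if i ∈ S then ballotABP else ballotBAP

lemma splitProfile_injective (i : ι) : Function.Injective (splitProfile S i) := by
  unfold splitProfile
  split_ifs <;> decide

variable [Fintype ι]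

lemma score_splitProfile_p : score k (splitProfile S) .p = 0 :=
  Finset.sum_eq_zero fun i _ => by
    unfold splitProfile
    split_ifs <;> rfl

lemma score_splitProfile_a :
    score k (splitProfile S) .a = ∑ i, k i + ∑ i ∈ S, k i := by
  have hfilter : Finset.univ.filter (fun i => splitProfile S i .a = 0) = S := by
    ext i
    rw [Finset.mem_filter]
    by_cases hi : i ∈ S <;> simp [splitProfile, hi, ballotABP, ballotBAP]
  rw [score_a_eq_of_score_p_eq_zero k _ (splitProfile_injective S) (score_splitProfile_p k S),
    hfilter]

end Construction

theorem stmt4_general (t K : ℕ) (hK : 0 < K) (k : Fin t → ℕ)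
    (hsum : ∑ i, k i = 2 * K) :
    (∃ S : Finset (Fin t), ∑ i ∈ S, k i = K) ↔
    ∃ r : Fin t → Cand → Fin 3, (∀ i, Function.Injective (r i)) ∧
      (¬ (∀ c : Cand, (∑ i, k i * pts (r i) c) ≤ ∑ i, k i * pts (r i) Cand.p)) ∧
      (¬ (∀ c : Cand,
            (∑ i, k i * pts (r i) c) + (3 * K - 1) * pts ballotPAB c ≤
            (∑ i, k i * pts (r i) Cand.p) + (3 * K - 1) * pts ballotPAB Cand.p)) ∧
      (¬ (∀ c : Cand,
            (∑ i, k i * pts (r i) c) + (3 * K - 1) * pts ballotPBA c ≤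
            (∑ i, k i * pts (r i) Cand.p) + (3 * K - 1) * pts ballotPBA Cand.p)) := by
  have hw : ∑ i, k i ≤ 3 * K - 1 := by omega
  constructor
  · rintro ⟨S, hS⟩
    have hp := score_splitProfile_p k S
    have ha := score_splitProfile_a k S
    have htotal := score_p_add_score_a_add_score_b k _ (splitProfile_injective S)
    refine ⟨splitProfile S, splitProfile_injective S, fun h => ?_,
      (not_forall_score_add_le_iff k _ (by decide) rfl hw).mpr ⟨.a, rfl, ?_⟩,
      (not_forall_score_add_le_iff k _ (by decide) rfl hw).mpr ⟨.b, rfl, ?_⟩⟩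
    · have : score k (splitProfile S) .a ≤ score k (splitProfile S) .p := h .a
      omega
    all_goals omega
  · rintro ⟨r, hr, -, hPAB, hPBA⟩
    obtain ⟨c, hc, ha⟩ := (not_forall_score_add_le_iff k r (by decide) rfl hw).mp hPAB
    obtain ⟨d, hd, hb⟩ := (not_forall_score_add_le_iff k r (by decide) rfl hw).mp hPBA
    rw [ballotPAB_eq_one_iff] at hc
    rw [ballotPBA_eq_one_iff] at hd
    subst hc hd
    exact exists_sum_eq_of_score hsum hr (by omega) (by omega)

/-- For positive weights `k 1, …, k t` summing to `2K`, with registered manipulators of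
those weights, two unregistered voters of weight `3K-1` voting `p > a > b` and
`p > b > a`, and addition limit one: some subsequence of the weights sums to `K`
iff the manipulators can vote so that no choice of at most one unregistered voter to
add makes `p` a winner of the weighted Borda election. -/
theorem stmt4 (t K : ℕ) (hK : 0 < K) (k : Fin t → ℕ) (hpos : ∀ i, 0 < k i)
    (hsum : ∑ i, k i = 2 * K) :
    (∃ S : Finset (Fin t), ∑ i ∈ S, k i = K) ↔
    ∃ r : Fin t → Cand → Fin 3, (∀ i, Function.Injective (r i)) ∧
      (¬ (∀ c : Cand, (∑ i, k i * pts (r i) c) ≤ ∑ i, k i * pts (r i) Cand.p)) ∧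
      (¬ (∀ c : Cand,
            (∑ i, k i * pts (r i) c) + (3 * K - 1) * pts ballotPAB c ≤
            (∑ i, k i * pts (r i) Cand.p) + (3 * K - 1) * pts ballotPAB Cand.p)) ∧
      (¬ (∀ c : Cand,
            (∑ i, k i * pts (r i) c) + (3 * K - 1) * pts ballotPBA c ≤
            (∑ i, k i * pts (r i) Cand.p) + (3 * K - 1) * pts ballotPBA Cand.p)) :=
  stmt4_general t K hK k hsum
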